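/- Let 𝒯 be any finite set of positive-definite binary integer-matrix forms, none of which is equivalent to ⟨1,1⟩ = x² + y². Then there exists a positive-definite integer-matrix lattice L that represents every form in 𝒯 but does not represent ⟨1,1⟩. -/

import Mathlib

/-!
A binary form `q` not equivalent to `⟨1,1⟩` either has minimum `≥ 2`, or it represents `1`, in
which case completing a primitive vector of norm `1` to a basis shows `q ≅ ⟨1, c⟩` with `c ≥ 2`.
Either way `q` embeds into `⟨1⟩ ⊥ B_q` for a binary `B_q` of minimum `≥ 2` (`B_q = q`, resp.
`⟨c, c⟩`). The lattice `⟨1⟩ ⊥ ⊥_q B_q` then represents every `q`, while its only vectors of norm `1`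
are `±e`, so it contains no two orthogonal ones and does not represent `⟨1,1⟩`.
-/

open Matrix

/-- `G` (Gram matrix of a `ℤ`-lattice) represents the quadratic form with Gram matrix `q`:
there is a `ℤ`-linear injection preserving the bilinear forms. -/
def Represents {ι κ : Type*} [Fintype ι] [Fintype κ]
    (G : Matrix ι ι ℤ) (q : Matrix κ κ ℤ) : Prop :=
  ∃ S : Matrix ι κ ℤ, Function.Injective S.mulVec ∧ Sᵀ * G * S = q

/-- A symmetric positive-definite integer Gram matrix. -/
def IsPosDefForm {ι : Type*} [Fintype ι] (G : Matrix ι ι ℤ) : Prop :=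
  G.IsSymm ∧ ∀ x : ι → ℤ, x ≠ 0 → 0 < x ⬝ᵥ G.mulVec x

/-- The binary form `[a,b,c] = a x² + 2 b x y + c y²` with Gram matrix `((a,b),(b,c))`. -/
def bin (a b c : ℤ) : Matrix (Fin 2) (Fin 2) ℤ := !![a, b; b, c]


/-- Two binary forms are equivalent if their Gram matrices are `GL₂(ℤ)`-equivalent. -/
def EquivForm (q q' : Matrix (Fin 2) (Fin 2) ℤ) : Prop :=
  ∃ U : Matrix (Fin 2) (Fin 2) ℤ, IsUnit U.det ∧ Uᵀ * q * U = q'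

section General

variable {ι κ μ : Type*} [Fintype ι] [Fintype κ] [Fintype μ]

omit [Fintype κ] in
theorem transpose_mul_mul_apply (S : Matrix ι κ ℤ) (G : Matrix ι ι ℤ) (a b : κ) :
    (Sᵀ * G * S) a b = Sᵀ a ⬝ᵥ G *ᵥ Sᵀ b := by
  rw [Matrix.mul_assoc, Matrix.mul_apply]
  simp only [Matrix.mul_apply, Matrix.mulVec, dotProduct, Matrix.transpose_apply]

theorem dotProduct_transpose_mul_mul_mulVec (S : Matrix ι κ ℤ) (G : Matrix ι ι ℤ) (x y : κ → ℤ) :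
    x ⬝ᵥ (Sᵀ * G * S) *ᵥ y = S *ᵥ x ⬝ᵥ G *ᵥ S *ᵥ y := by
  rw [Matrix.mul_assoc, ← Matrix.mulVec_mulVec, ← Matrix.mulVec_mulVec, Matrix.dotProduct_mulVec,
    Matrix.vecMul_transpose]

theorem Represents.trans {L : Matrix ι ι ℤ} {M : Matrix κ κ ℤ} {q : Matrix μ μ ℤ}
    (hLM : Represents L M) (hMq : Represents M q) : Represents L q := by
  obtain ⟨S, hS, rfl⟩ := hLM
  obtain ⟨T, hT, rfl⟩ := hMq
  refine ⟨S * T, fun v w h => hT (hS ?_), ?_⟩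
  · simpa only [Matrix.mulVec_mulVec] using h
  · simp only [Matrix.transpose_mul, Matrix.mul_assoc]

theorem represents_submatrix [DecidableEq ι] (L : Matrix ι ι ℤ) {f : κ → ι}
    (hf : Function.Injective f) : Represents L (L.submatrix f f) := by
  classical
  refine ⟨(1 : Matrix ι ι ℤ).submatrix id f, fun v w hvw => funext fun c => ?_, ?_⟩
  · simpa [Matrix.mulVec, dotProduct, Matrix.one_apply, hf.eq_iff] using congrFun hvw (f c)
  · ext a b
    rw [transpose_mul_mul_apply]
    simp [Matrix.mulVec, dotProduct, Matrix.one_apply]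

theorem IsPosDefForm.nonneg {G : Matrix ι ι ℤ} (hG : IsPosDefForm G) (x : ι → ℤ) :
    0 ≤ x ⬝ᵥ G *ᵥ x := by
  rcases eq_or_ne x 0 with rfl | hx
  · simp
  · exact (hG.2 x hx).le

theorem IsPosDefForm.of_represents {L : Matrix ι ι ℤ} {q : Matrix κ κ ℤ}
    (hL : IsPosDefForm L) (hLq : Represents L q) : IsPosDefForm q := by
  obtain ⟨S, hS, rfl⟩ := hLq
  refine ⟨?_, fun x hx => ?_⟩
  · simp [Matrix.IsSymm, Matrix.transpose_mul, hL.1.eq, Matrix.mul_assoc]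
  · rw [dotProduct_transpose_mul_mul_mulVec]
    exact hL.2 _ fun h => hx (hS (h.trans (Matrix.mulVec_zero S).symm))

theorem exists_represents_fin [DecidableEq ι] (L : Matrix ι ι ℤ) :
    ∃ (n : ℕ) (L' : Matrix (Fin n) (Fin n) ℤ), Represents L L' ∧ Represents L' L := by
  let e := Fintype.equivFin ι
  refine ⟨_, L.submatrix e.symm e.symm, represents_submatrix L e.symm.injective, ?_⟩
  simpa using represents_submatrix (L.submatrix e.symm e.symm) e.injective

end General

section Blocks

variable {ι κ o J : Type*} [Fintype ι] [Fintype κ] [Fintype o] [Fintype J]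

theorem dotProduct_fromBlocks_mulVec (A : Matrix ι ι ℤ) (B : Matrix κ κ ℤ) (x y : ι ⊕ κ → ℤ) :
    x ⬝ᵥ fromBlocks A 0 0 B *ᵥ y =
      x ∘ Sum.inl ⬝ᵥ A *ᵥ (y ∘ Sum.inl) + x ∘ Sum.inr ⬝ᵥ B *ᵥ (y ∘ Sum.inr) := by
  simp [Matrix.fromBlocks_mulVec, dotProduct, Fintype.sum_sum_type]

theorem isPosDefForm_one [DecidableEq ι] : IsPosDefForm (1 : Matrix ι ι ℤ) :=
  ⟨Matrix.transpose_one, fun x hx => by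
    rw [Matrix.one_mulVec]
    exact (Finset.sum_nonneg fun i _ => mul_self_nonneg (x i)).lt_of_ne
      (Ne.symm (dotProduct_self_eq_zero.not.mpr hx))⟩

theorem IsPosDefForm.fromBlocks {A : Matrix ι ι ℤ} {B : Matrix κ κ ℤ} (hA : IsPosDefForm A)
    (hB : IsPosDefForm B) : IsPosDefForm (fromBlocks A 0 0 B) := by
  refine ⟨by simp [Matrix.IsSymm, Matrix.fromBlocks_transpose, hA.1.eq, hB.1.eq], fun x hx => ?_⟩
  rw [dotProduct_fromBlocks_mulVec]
  by_cases hl : x ∘ Sum.inl = 0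
  · have hr : x ∘ Sum.inr ≠ 0 := fun hr => hx <| by
      rw [← Sum.elim_comp_inl_inr x, hl, hr]
      ext (i | i) <;> rfl
    linarith [hA.nonneg (x ∘ Sum.inl), hB.2 _ hr]
  · linarith [hA.2 _ hl, hB.nonneg (x ∘ Sum.inr)]

theorem Represents.fromBlocks_right [DecidableEq ι] {A : Matrix ι ι ℤ} {B : Matrix κ κ ℤ}
    {q : Matrix o o ℤ} (hBq : Represents B q) :
    Represents (fromBlocks A 0 0 B) (fromBlocks A 0 0 q) := by
  obtain ⟨S, hS, rfl⟩ := hBq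
  refine ⟨fromBlocks 1 0 0 S, fun v w h => ?_, ?_⟩
  · have hl := congrArg (· ∘ Sum.inl) h
    have hr := congrArg (· ∘ Sum.inr) h
    simp only [Matrix.fromBlocks_mulVec, Matrix.one_mulVec, Matrix.zero_mulVec, add_zero, zero_add,
      Sum.elim_comp_inl, Sum.elim_comp_inr] at hl hr
    ext (i | i)
    · exact congrFun hl i
    · exact congrFun (hS hr) i
  · simp [Matrix.fromBlocks_transpose, Matrix.fromBlocks_multiply, Matrix.mul_assoc]

theorem dotProduct_blockDiagonal_mulVec [DecidableEq J] (D : J → Matrix o o ℤ) (x y : o × J → ℤ) :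
    x ⬝ᵥ blockDiagonal D *ᵥ y = ∑ j, (fun i => x (i, j)) ⬝ᵥ D j *ᵥ fun i => y (i, j) := by
  simp only [dotProduct, Matrix.mulVec, Matrix.blockDiagonal_apply, ite_mul, zero_mul,
    Fintype.sum_prod_type, Finset.sum_ite_eq, Finset.mem_univ, if_true, Finset.mul_sum]
  rw [Finset.sum_comm]

theorem le_dotProduct_blockDiagonal_mulVec [DecidableEq J] {D : J → Matrix o o ℤ} {m : ℤ}
    (hm : 0 ≤ m) (hD : ∀ j y, y ≠ 0 → m ≤ y ⬝ᵥ D j *ᵥ y) {x : o × J → ℤ} (hx : x ≠ 0) :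
    m ≤ x ⬝ᵥ blockDiagonal D *ᵥ x := by
  have hblock : ∀ j, 0 ≤ (fun i => x (i, j)) ⬝ᵥ D j *ᵥ fun i => x (i, j) := fun j => by
    by_cases h : (fun i => x (i, j)) = 0
    · simp [h]
    · exact hm.trans (hD j _ h)
  obtain ⟨⟨i, j⟩, hij⟩ := Function.ne_iff.mp hx
  rw [dotProduct_blockDiagonal_mulVec]
  exact (hD j _ (Function.ne_iff.mpr ⟨i, hij⟩)).trans
    (Finset.single_le_sum (fun j _ => hblock j) (Finset.mem_univ j))

theorem represents_blockDiagonal [DecidableEq o] [DecidableEq J] (D : J → Matrix o o ℤ) (j : J) :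
    Represents (blockDiagonal D) (D j) := by
  have hsub : (blockDiagonal D).submatrix (fun i => (i, j)) (fun i => (i, j)) = D j := by
    ext a b
    simp [Matrix.blockDiagonal_apply]
  exact hsub ▸ represents_submatrix _ fun a b h => (Prod.ext_iff.mp h).1

end Blocks

section BinaryForms

theorem EquivForm.symm {q q' : Matrix (Fin 2) (Fin 2) ℤ} (h : EquivForm q q') : EquivForm q' q := by
  obtain ⟨U, hU, rfl⟩ := h
  refine ⟨U⁻¹, (Matrix.isUnit_nonsing_inv_det_iff).mpr hU, ?_⟩
  have hUt : IsUnit Uᵀ.det := by rwa [Matrix.det_transpose]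
  rw [Matrix.transpose_nonsing_inv, Matrix.mul_assoc, Matrix.mul_assoc, Matrix.mul_nonsing_inv _ hU,
    Matrix.mul_one, ← Matrix.mul_assoc, Matrix.nonsing_inv_mul _ hUt, Matrix.one_mul]

theorem EquivForm.represents {q q' : Matrix (Fin 2) (Fin 2) ℤ} (h : EquivForm q q') :
    Represents q q' := by
  obtain ⟨U, hU, hq'⟩ := h
  exact ⟨U, Matrix.mulVec_injective_of_isUnit ((Matrix.isUnit_iff_isUnit_det U).mpr hU), hq'⟩

theorem exists_equivForm_bin_one_zero {q : Matrix (Fin 2) (Fin 2) ℤ} (hq : q.IsSymm)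
    {x : Fin 2 → ℤ} (hx : x ⬝ᵥ q *ᵥ x = 1) : ∃ c, EquivForm q (bin 1 0 c) := by
  obtain ⟨w, hw⟩ : ∃ w, q *ᵥ x = w := ⟨_, rfl⟩
  -- `y` is `w = q x` turned by a right angle, so `x ⬝ q y = w ⬝ y = 0` and `det [x y] = x ⬝ w = 1`.
  set y : Fin 2 → ℤ := ![-w 1, w 0]
  have hwy : w ⬝ᵥ y = 0 := by
    simp only [y, dotProduct, Fin.sum_univ_two, Matrix.cons_val_zero, Matrix.cons_val_one]
    ring
  have hxy : x ⬝ᵥ q *ᵥ y = 0 := by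
    rw [Matrix.dotProduct_mulVec, ← Matrix.mulVec_transpose, hq.eq, hw, hwy]
  have hyx : y ⬝ᵥ q *ᵥ x = 0 := by rw [hw, dotProduct_comm, hwy]
  refine ⟨y ⬝ᵥ q *ᵥ y, (Matrix.of ![x, y])ᵀ, ?_, ?_⟩
  · rw [Matrix.det_transpose, Matrix.det_fin_two]
    have hxw : x 0 * w 0 + x 1 * w 1 = 1 := by
      simpa [← hw, dotProduct, Fin.sum_univ_two] using hx
    simp [y, hxw]
  · ext a b
    rw [transpose_mul_mul_apply, Matrix.transpose_transpose]
    change ![x, y] a ⬝ᵥ q *ᵥ ![x, y] b = bin 1 0 _ a b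
    fin_cases a <;> fin_cases b
    exacts [hx, hxy, hyx, rfl]

end BinaryForms

section Construction

variable {κ : Type*} [Fintype κ]

theorem represents_fromBlocks_inr {ι : Type*} [Fintype ι] [DecidableEq ι] [DecidableEq κ]
    (A : Matrix ι ι ℤ) (B : Matrix κ κ ℤ) : Represents (fromBlocks A 0 0 B) B :=
  represents_submatrix (fromBlocks A 0 0 B) Sum.inr_injective

theorem represents_fromBlocks_one_bin [DecidableEq κ] (B : Matrix κ κ ℤ) (i : κ) :
    Represents (fromBlocks (1 : Matrix Unit Unit ℤ) 0 0 B) (bin 1 0 (B i i)) := by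
  have hinj : Function.Injective ![Sum.inl (), Sum.inr i] := fun a b h => by
    fin_cases a <;> fin_cases b <;> simp_all
  convert represents_submatrix _ hinj using 1
  ext a b
  fin_cases a <;> fin_cases b <;> simp [bin]

theorem le_dotProduct_bin_mulVec {c : ℤ} (hc : 0 ≤ c) {x : Fin 2 → ℤ} (hx : x ≠ 0) :
    c ≤ x ⬝ᵥ bin c 0 c *ᵥ x := by
  have hx' : x 0 ≠ 0 ∨ x 1 ≠ 0 := by
    by_contra! h
    exact hx (funext fun i => by fin_cases i <;> simp [h])
  simp only [dotProduct, bin, Matrix.cons_mulVec, Fin.sum_univ_two, Matrix.cons_val_zero,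
    Matrix.cons_val_one, Matrix.cons_val_fin_one, zero_mul, add_zero, zero_add]
  rcases hx' with h | h
  · nlinarith [mul_self_pos.mpr h, mul_self_nonneg (x 1)]
  · nlinarith [mul_self_pos.mpr h, mul_self_nonneg (x 0)]

theorem exists_minimum_two_summand {q : Matrix (Fin 2) (Fin 2) ℤ} (hq : IsPosDefForm q)
    (hne : ¬ EquivForm q (bin 1 0 1)) :
    ∃ B : Matrix (Fin 2) (Fin 2) ℤ, B.IsSymm ∧ (∀ y, y ≠ 0 → 2 ≤ y ⬝ᵥ B *ᵥ y) ∧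
      Represents (fromBlocks (1 : Matrix Unit Unit ℤ) 0 0 B) q := by
  by_cases hone : ∃ x, x ⬝ᵥ q *ᵥ x = 1
  · obtain ⟨x, hx⟩ := hone
    obtain ⟨c, hc⟩ := exists_equivForm_bin_one_zero hq.1 hx
    have hc_pos : 0 < c := by
      simpa [bin, dotProduct] using (hq.of_represents hc.represents).2 ![0, 1] (by simp)
    have hc_ne : c ≠ 1 := by
      rintro rfl
      exact hne hc
    refine ⟨bin c 0 c, ?_, fun y hy => ?_, ?_⟩
    · ext i j
      fin_cases i <;> fin_cases j <;> rfl
    · linarith [le_dotProduct_bin_mulVec hc_pos.le hy, lt_of_le_of_ne hc_pos hc_ne.symm]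
    · exact (represents_fromBlocks_one_bin (bin c 0 c) 1).trans hc.symm.represents
  · push Not at hone
    refine ⟨q, hq.1, fun y hy => ?_, represents_fromBlocks_inr 1 q⟩
    have := hq.2 y hy
    have := hone y
    omega

theorem not_represents_fromBlocks_one_bin_one_zero_one {M : Matrix κ κ ℤ}
    (hM : ∀ y, y ≠ 0 → 2 ≤ y ⬝ᵥ M *ᵥ y) :
    ¬ Represents (fromBlocks (1 : Matrix Unit Unit ℤ) 0 0 M) (bin 1 0 1) := by
  have hform : ∀ x y : Unit ⊕ κ → ℤ, x ⬝ᵥ fromBlocks 1 0 0 M *ᵥ y =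
      x (Sum.inl ()) * y (Sum.inl ()) + x ∘ Sum.inr ⬝ᵥ M *ᵥ (y ∘ Sum.inr) := fun x y => by
    rw [dotProduct_fromBlocks_mulVec, Matrix.one_mulVec]
    congr 1
    simp [dotProduct]
  have hunit : ∀ x : Unit ⊕ κ → ℤ, x ⬝ᵥ fromBlocks 1 0 0 M *ᵥ x = 1 →
      x ∘ Sum.inr = 0 ∧ (x (Sum.inl ()) = 1 ∨ x (Sum.inl ()) = -1) := by
    intro x hx
    rw [hform] at hx
    have hr : x ∘ Sum.inr = 0 := by
      by_contra hr
      nlinarith [hM _ hr, mul_self_nonneg (x (Sum.inl ()))]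
    rw [hr, zero_dotProduct, add_zero] at hx
    exact ⟨hr, mul_self_eq_one_iff.mp hx⟩
  rintro ⟨S, -, hS⟩
  have entry : ∀ a b, Sᵀ a ⬝ᵥ fromBlocks 1 0 0 M *ᵥ Sᵀ b = bin 1 0 1 a b := fun a b => by
    rw [← transpose_mul_mul_apply, hS]
  obtain ⟨hu, hu'⟩ := hunit _ (entry 0 0)
  obtain ⟨hv, hv'⟩ := hunit _ (entry 1 1)
  have h01 : Sᵀ 0 (Sum.inl ()) * Sᵀ 1 (Sum.inl ()) = 0 := by
    have := entry 0 1
    rwa [hform, hu, hv, zero_dotProduct, add_zero] at this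
  rcases hu' with h | h <;> rcases hv' with h' | h' <;> rw [h, h'] at h01 <;> norm_num at h01

end Construction

/-- if `𝒯` is a finite set of positive-definite binary forms none of which
is equivalent to `⟨1,1⟩`, then some positive-definite lattice represents all of `𝒯` but
not `⟨1,1⟩`. -/
theorem exists_lattice_truant_one_one (T : Finset (Matrix (Fin 2) (Fin 2) ℤ))
    (hpd : ∀ q ∈ T, IsPosDefForm q)
    (hne : ∀ q ∈ T, ¬ EquivForm q (bin 1 0 1)) :
    ∃ (n : ℕ) (L : Matrix (Fin n) (Fin n) ℤ), IsPosDefForm L ∧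
      (∀ q ∈ T, Represents L q) ∧ ¬ Represents L (bin 1 0 1) := by
  classical
  choose B hB_symm hB_min hB_rep using
    fun q : T => exists_minimum_two_summand (hpd q q.2) (hne q q.2)
  have hM_min : ∀ y, y ≠ 0 → 2 ≤ y ⬝ᵥ blockDiagonal B *ᵥ y := fun y hy =>
    le_dotProduct_blockDiagonal_mulVec zero_le_two hB_min hy
  have hM : IsPosDefForm (blockDiagonal B) :=
    ⟨by simp [Matrix.IsSymm, Matrix.blockDiagonal_transpose, fun q => (hB_symm q).eq],
      fun y hy => by linarith [hM_min y hy]⟩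
  obtain ⟨n, L, hL0L, hLL0⟩ :=
    exists_represents_fin (fromBlocks (1 : Matrix Unit Unit ℤ) 0 0 (blockDiagonal B))
  refine ⟨n, L, (isPosDefForm_one.fromBlocks hM).of_represents hL0L, fun q hq => ?_,
    fun h => not_represents_fromBlocks_one_bin_one_zero_one hM_min (hL0L.trans h)⟩
  exact hLL0.trans ((represents_blockDiagonal B ⟨q, hq⟩).fromBlocks_right.trans (hB_rep ⟨q, hq⟩))
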